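/- arXiv:1409.0406 — 2 statements merged into one kernel-verified Lean document; each statement's English description precedes it below -/
import Mathlib

section
/- Let A, L, R be N×N complex matrices with L and R diagonal, satisfying LA − AR = |ℓ⟩⟨a|. Let ζ ∈ ℂ be such that ζ − L and 1 + A are invertible. Then det(1 + A·(R − ζ)(L − ζ)⁻¹) = det(1 + A)·(1 − ⟨a|(1 + A)⁻¹(L − ζ)⁻¹|ℓ⟩). -/
/-!
Write `M = L - ζ` and `N = R - ζ`, so that `M A - A N = |ℓ⟩⟨a|` still holds. Then
`1 + A N M⁻¹ = M (1 + A - M⁻¹ |ℓ⟩⟨a|) M⁻¹`, so the shifted determinant is that of a rank-one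
perturbation of `1 + A`, which the matrix determinant lemma evaluates.
-/

open Matrix

namespace Matrix

variable {n α : Type*} [Fintype n] [DecidableEq n] [CommRing α]

theorem det_sub_vecMulVec {B : Matrix n n α} (hB : IsUnit B.det) (u v : n → α) :
    (B - vecMulVec u v).det = B.det * (1 - v ⬝ᵥ B⁻¹ *ᵥ u) := by
  have hfactor : B - vecMulVec u v = B * (1 - vecMulVec (B⁻¹ *ᵥ u) v) := by
    rw [Matrix.mul_sub, Matrix.mul_one, ← mul_vecMulVec, ← Matrix.mul_assoc,
      mul_nonsing_inv B hB, Matrix.one_mul]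
  rw [hfactor, det_mul]
  congr 1
  rw [vecMulVec_eq Unit, det_one_sub_mul_comm, det_unique,
    Matrix.sub_apply, Matrix.one_apply_eq, replicateRow_mul_replicateCol_apply]

theorem det_one_add_mul_mul_eq_of_displacement {A M N E W : Matrix n n α}
    (hdisp : M * A - A * N = W) (hME : M * E = 1) :
    (1 + A * N * E).det = (1 + A - E * W).det := by
  have hconj : 1 + A * N * E = M * (1 + A - E * W) * E := by
    have hAN : A * N = M * A - W := by rw [← hdisp]; abel
    simp only [hAN, Matrix.mul_sub, Matrix.mul_add, Matrix.sub_mul, Matrix.add_mul,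
      Matrix.mul_one, ← Matrix.mul_assoc, hME, Matrix.one_mul]
    abel
  rw [hconj, det_mul, det_mul, mul_right_comm, ← det_mul, hME, det_one, one_mul]

end Matrix

theorem stmt_1 {N : ℕ} (A : Matrix (Fin N) (Fin N) ℂ) (l r ℓ a : Fin N → ℂ) (ζ : ℂ)
    (hrank : Matrix.diagonal l * A - A * Matrix.diagonal r = Matrix.vecMulVec ℓ a)
    (hζL : ∀ k, l k - ζ ≠ 0)
    (hA : IsUnit (1 + A).det) :
    (1 + A * Matrix.diagonal (fun k => (r k - ζ) * (l k - ζ)⁻¹)).det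
      = (1 + A).det *
        (1 - a ⬝ᵥ ((1 + A)⁻¹ * Matrix.diagonal (fun k => (l k - ζ)⁻¹)).mulVec ℓ) := by
  set E := diagonal fun k => (l k - ζ)⁻¹
  have hdisp : diagonal (fun k => l k - ζ) * A - A * diagonal (fun k => r k - ζ)
      = vecMulVec ℓ a := by
    ext i j
    have hij := congrFun₂ hrank i j
    simp only [Matrix.sub_apply, diagonal_mul, mul_diagonal] at hij ⊢
    linear_combination hij
  have hME : diagonal (fun k => l k - ζ) * E = 1 := by
    rw [diagonal_mul_diagonal, ← diagonal_one]
    exact congrArg diagonal (funext fun k => mul_inv_cancel₀ (hζL k))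
  rw [← diagonal_mul_diagonal, ← Matrix.mul_assoc,
    det_one_add_mul_mul_eq_of_displacement hdisp hME, mul_vecMulVec, det_sub_vecMulVec hA, mulVec_mulVec]
end

section
/- Let A, L, R be N×N complex matrices with L, R diagonal, satisfying LA − AR = |ℓ⟩⟨a|. Let Ξ and H be finite multisets of complex numbers, and set H_Ξ = ∏_{ξ∈Ξ}(ξ−L)(ξ−R)⁻¹ and H_H = ∏_{η∈H}(η−L)(η−R)⁻¹ (assuming all inverses exist). Let X = A H_Ξ, Y = A H_H, ⟨y| = ⟨a| H_H, and suppose 1+X, 1+Y, ζ−L, ζ−R are invertible. Then det(1 + X(ζ−L)(ζ−R)⁻¹)·det(1 + Y(ζ−R)(ζ−L)⁻¹) = det(1+X)·det(1+Y)·[1 + ⟨y|(1+Y)⁻¹ D(ζ) (1+X)⁻¹|ℓ⟩], where D(ζ) = H_Ξ H_H⁻¹ (R−ζ)⁻¹ − (L−ζ)⁻¹. -/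
/-!
Write `X = A H_Ξ`, `Y = A H_H`, `P = ζ - L`, `Q = ζ - R`. Since all these diagonal matrices commute,
the rank-one relation `LA - AR = |ℓ⟩⟨a|` becomes the two rank-one shift relations
`P X = X Q - |ℓ⟩⟨x|` and `Y Q = P Y + |ℓ⟩⟨y|`, with `⟨x| = ⟨a|H_Ξ` and `⟨y| = ⟨a|H_H`. By Sylvester's identity `det (1 + UV) = det (1 + VU)`
each shifted determinant becomes `det (1 + X + rank one)` or `det (1 + Y + rank one)`, so the matrix
determinant lemma gives it as `det (1 + X)` resp. `det (1 + Y)` times a scalar `1 + ⟨·|·|·⟩`.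
The product of these two scalars collapses to the single one of the theorem by the resolvent identity
`(1 + Y)⁻¹ (P⁻¹ - N) (1 + X)⁻¹ = (1 + Y)⁻¹ P⁻¹ - N (1 + X)⁻¹ - (1 + Y)⁻¹ P⁻¹ |ℓ⟩⟨y| N (1 + X)⁻¹`
for `N = H_Ξ H_H⁻¹ Q⁻¹`, which holds because `(P Y + |ℓ⟩⟨y|) N = Y Q N = X`.
-/

open Matrix

/-- The diagonal shift matrix `H_Ξ = ∏_{ξ∈Ξ} (ξ−L)(ξ−R)⁻¹` for diagonal `L, R`. -/
noncomputable def Hmat {N : ℕ} (l r : Fin N → ℂ) (Ξ : Multiset ℂ) :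
    Matrix (Fin N) (Fin N) ℂ :=
  Matrix.diagonal (fun k => (Ξ.map (fun ξ => (ξ - l k) * (ξ - r k)⁻¹)).prod)

theorem Multiset.prod_map_sub_mul_inv_sub_ne_zero {K : Type*} [Field K] {s : Multiset K}
    {x y : K} (hx : ∀ η ∈ s, η - x ≠ 0) (hy : ∀ η ∈ s, η - y ≠ 0) :
    (s.map fun η => (η - x) * (η - y)⁻¹).prod ≠ 0 :=
  Multiset.prod_ne_zero fun h => by
    obtain ⟨η, hη, h0⟩ := Multiset.mem_map.mp h
    exact mul_ne_zero (hx η hη) (inv_ne_zero (hy η hη)) h0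

namespace Matrix

variable {n K : Type*} [Fintype n] [DecidableEq n]

section CommRing

variable [CommRing K]

theorem det_add_vecMulVec {A : Matrix n n K} (hA : IsUnit A.det) (u v : n → K) :
    (A + vecMulVec u v).det = A.det * (1 + v ⬝ᵥ A⁻¹ *ᵥ u) := by
  have hfac : A + vecMulVec u v = A * (1 + vecMulVec (A⁻¹ *ᵥ u) v) := by
    rw [Matrix.mul_add, Matrix.mul_one, mul_vecMulVec, mulVec_mulVec,
      mul_nonsing_inv _ hA, one_mulVec]
  rw [hfac, det_mul, vecMulVec_eq Unit, det_one_add_replicateCol_mul_replicateRow]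

theorem det_one_add_mul_inv_mul_of_mul_eq {X P Q : Matrix n n K} {u v : n → K}
    (hQ : IsUnit Q.det) (hX : IsUnit (1 + X).det) (h : P * X = X * Q + vecMulVec u v) :
    (1 + X * (Q⁻¹ * P)).det = (1 + X).det * (1 + (v ᵥ* Q⁻¹) ⬝ᵥ (1 + X)⁻¹ *ᵥ u) := by
  rw [← Matrix.mul_assoc, det_one_add_mul_comm, ← Matrix.mul_assoc, h, Matrix.add_mul,
    mul_nonsing_inv_cancel_right _ _ hQ, vecMulVec_mul, ← add_assoc, det_add_vecMulVec hX]

theorem det_one_add_mul_mul_inv_of_mul_eq {Y P Q : Matrix n n K} {u v : n → K}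
    (hP : IsUnit P.det) (hY : IsUnit (1 + Y).det) (h : Y * Q = P * Y + vecMulVec u v) :
    (1 + Y * (Q * P⁻¹)).det = (1 + Y).det * (1 + v ⬝ᵥ (1 + Y)⁻¹ *ᵥ P⁻¹ *ᵥ u) := by
  rw [← Matrix.mul_assoc, det_one_add_mul_comm, h, Matrix.mul_add,
    nonsing_inv_mul_cancel_left _ _ hP, mul_vecMulVec, ← add_assoc, det_add_vecMulVec hY]

theorem inv_one_add_mul_sub_mul_inv_one_add {X Y P N : Matrix n n K} {u v : n → K}
    (hP : IsUnit P.det) (hX : IsUnit (1 + X).det) (hY : IsUnit (1 + Y).det)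
    (h : (P * Y + vecMulVec u v) * N = X) :
    (1 + Y)⁻¹ * (P⁻¹ - N) * (1 + X)⁻¹
      = (1 + Y)⁻¹ * P⁻¹ - N * (1 + X)⁻¹ - (1 + Y)⁻¹ * P⁻¹ * vecMulVec u v * N * (1 + X)⁻¹ := by
  have hsplit : P⁻¹ - N = P⁻¹ * (1 + X) - (1 + Y) * N - P⁻¹ * vecMulVec u v * N := by
    rw [← h]
    simp only [Matrix.mul_add, Matrix.add_mul, Matrix.mul_one, Matrix.one_mul,
      ← Matrix.mul_assoc, nonsing_inv_mul _ hP]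
    abel
  rw [hsplit]
  simp only [Matrix.mul_sub, Matrix.sub_mul, ← Matrix.mul_assoc, nonsing_inv_mul _ hY,
    Matrix.one_mul]
  simp only [Matrix.mul_assoc, mul_nonsing_inv _ hX, Matrix.mul_one]

theorem one_add_dotProduct_inv_one_add_mul_sub_mul_inv_one_add {X Y P N : Matrix n n K}
    {u v : n → K} (hP : IsUnit P.det) (hX : IsUnit (1 + X).det) (hY : IsUnit (1 + Y).det)
    (h : (P * Y + vecMulVec u v) * N = X) :
    1 + v ⬝ᵥ ((1 + Y)⁻¹ * (P⁻¹ - N) * (1 + X)⁻¹) *ᵥ u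
      = (1 - (v ᵥ* N) ⬝ᵥ (1 + X)⁻¹ *ᵥ u) * (1 + v ⬝ᵥ (1 + Y)⁻¹ *ᵥ P⁻¹ *ᵥ u) := by
  rw [inv_one_add_mul_sub_mul_inv_one_add hP hX hY h]
  simp only [sub_mulVec, ← mulVec_mulVec, vecMulVec_mulVec, op_smul_eq_smul, mulVec_smul,
    dotProduct_sub, dotProduct_smul, smul_eq_mul, dotProduct_mulVec]
  ring

theorem diagonal_const_sub_mul_mul_diagonal {A : Matrix n n K} {l r ℓ a : n → K}
    (h : diagonal l * A - A * diagonal r = vecMulVec ℓ a) (c : K) (d : n → K) :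
    diagonal (fun k => c - l k) * (A * diagonal d)
      = A * diagonal d * diagonal (fun k => c - r k) - vecMulVec ℓ (a ᵥ* diagonal d) := by
  ext i j
  have hij := congr_fun (congr_fun h i) j
  simp only [sub_apply, diagonal_mul, mul_diagonal, vecMulVec_apply, vecMul_diagonal] at hij ⊢
  linear_combination (-d j) * hij

end CommRing

section Field

variable [Field K]

theorem inv_diagonal_of_ne_zero {v : n → K} (hv : ∀ k, v k ≠ 0) :
    (diagonal v)⁻¹ = diagonal fun k => (v k)⁻¹ :=
  inv_eq_right_inv (by simp [hv])

theorem isUnit_det_diagonal_of_ne_zero {v : n → K} (hv : ∀ k, v k ≠ 0) :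
    IsUnit (diagonal v).det := by
  rw [det_diagonal, isUnit_iff_ne_zero]
  exact Finset.prod_ne_zero_iff.mpr fun k _ => hv k

theorem det_mul_det_eq_of_diagonal_mul_sub_eq_vecMulVec {A : Matrix n n K}
    {l r ℓ a d₁ d₂ : n → K} {ζ : K}
    (hrank : diagonal l * A - A * diagonal r = vecMulVec ℓ a) (hd₂ : ∀ k, d₂ k ≠ 0)
    (hζl : ∀ k, ζ - l k ≠ 0) (hζr : ∀ k, ζ - r k ≠ 0)
    (hX : IsUnit (1 + A * diagonal d₁).det) (hY : IsUnit (1 + A * diagonal d₂).det) :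
    (1 + A * diagonal d₁ * diagonal (fun k => (ζ - l k) * (ζ - r k)⁻¹)).det *
      (1 + A * diagonal d₂ * diagonal (fun k => (ζ - r k) * (ζ - l k)⁻¹)).det
    = (1 + A * diagonal d₁).det * (1 + A * diagonal d₂).det *
        (1 + (a ᵥ* diagonal d₂) ⬝ᵥ
          ((1 + A * diagonal d₂)⁻¹ *
            (diagonal d₁ * (diagonal d₂)⁻¹ * diagonal (fun k => (r k - ζ)⁻¹)
              - diagonal (fun k => (l k - ζ)⁻¹)) *
            (1 + A * diagonal d₁)⁻¹) *ᵥ ℓ) := by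
  set P : Matrix n n K := diagonal fun k => ζ - l k
  set Q : Matrix n n K := diagonal fun k => ζ - r k
  set N : Matrix n n K := diagonal fun k => d₁ k * (d₂ k)⁻¹ * (ζ - r k)⁻¹ with hNdef
  have hPinv : P⁻¹ = diagonal fun k => (ζ - l k)⁻¹ := inv_diagonal_of_ne_zero hζl
  have hQinv : Q⁻¹ = diagonal fun k => (ζ - r k)⁻¹ := inv_diagonal_of_ne_zero hζr
  have hshift := diagonal_const_sub_mul_mul_diagonal hrank ζ
  have hXshift : P * (A * diagonal d₁)
      = A * diagonal d₁ * Q + vecMulVec (-ℓ) (a ᵥ* diagonal d₁) := by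
    rw [hshift, neg_vecMulVec, sub_eq_add_neg]
  have hYshift : A * diagonal d₂ * Q
      = P * (A * diagonal d₂) + vecMulVec ℓ (a ᵥ* diagonal d₂) := by
    rw [hshift, sub_add_cancel]
  have hN : (P * (A * diagonal d₂) + vecMulVec ℓ (a ᵥ* diagonal d₂)) * N = A * diagonal d₁ := by
    rw [← hYshift, Matrix.mul_assoc, Matrix.mul_assoc, diagonal_mul_diagonal, diagonal_mul_diagonal]
    congr 2
    funext k
    field_simp [hd₂ k, hζr k]
  have hyN : (a ᵥ* diagonal d₂) ᵥ* N = (a ᵥ* diagonal d₁) ᵥ* Q⁻¹ := by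
    rw [hQinv, vecMul_vecMul, vecMul_vecMul, diagonal_mul_diagonal, diagonal_mul_diagonal]
    congr 2
    funext k
    field_simp [hd₂ k]
  have hD : diagonal d₁ * (diagonal d₂)⁻¹ * diagonal (fun k => (r k - ζ)⁻¹)
      - diagonal (fun k => (l k - ζ)⁻¹) = P⁻¹ - N := by
    rw [hPinv, inv_diagonal_of_ne_zero hd₂, diagonal_mul_diagonal, diagonal_mul_diagonal,
      hNdef, diagonal_sub, diagonal_sub]
    congr 1
    funext k
    rw [← neg_sub ζ (r k), ← neg_sub ζ (l k), inv_neg, inv_neg]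
    ring
  have hXfactor : diagonal (fun k => (ζ - l k) * (ζ - r k)⁻¹) = Q⁻¹ * P := by
    rw [hQinv, diagonal_mul_diagonal]; simp_rw [mul_comm]
  have hYfactor : diagonal (fun k => (ζ - r k) * (ζ - l k)⁻¹) = Q * P⁻¹ := by
    rw [hPinv, diagonal_mul_diagonal]
  rw [hXfactor, hYfactor, hD,
    det_one_add_mul_inv_mul_of_mul_eq (isUnit_det_diagonal_of_ne_zero hζr) hX hXshift,
    det_one_add_mul_mul_inv_of_mul_eq (isUnit_det_diagonal_of_ne_zero hζl) hY hYshift,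
    one_add_dotProduct_inv_one_add_mul_sub_mul_inv_one_add
      (isUnit_det_diagonal_of_ne_zero hζl) hX hY hN, hyN, mulVec_neg, dotProduct_neg]
  ring

end Field

end Matrix

theorem stmt_2_general {N : ℕ} (A : Matrix (Fin N) (Fin N) ℂ) (l r ℓ a : Fin N → ℂ)
    (Ξ H : Multiset ℂ) (ζ : ℂ)
    (hrank : Matrix.diagonal l * A - A * Matrix.diagonal r = Matrix.vecMulVec ℓ a)
    (hHr : ∀ η ∈ H, ∀ k, η - r k ≠ 0)
    (hHl : ∀ η ∈ H, ∀ k, η - l k ≠ 0)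
    (hζL : ∀ k, ζ - l k ≠ 0)
    (hζR : ∀ k, ζ - r k ≠ 0)
    (hX : IsUnit (1 + A * Hmat l r Ξ).det)
    (hY : IsUnit (1 + A * Hmat l r H).det) :
    (1 + (A * Hmat l r Ξ) * Matrix.diagonal (fun k => (ζ - l k) * (ζ - r k)⁻¹)).det *
      (1 + (A * Hmat l r H) * Matrix.diagonal (fun k => (ζ - r k) * (ζ - l k)⁻¹)).det
    = (1 + A * Hmat l r Ξ).det * (1 + A * Hmat l r H).det *
        (1 + (a ᵥ* Hmat l r H) ⬝ᵥ
          ((1 + A * Hmat l r H)⁻¹ *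
            (Hmat l r Ξ * (Hmat l r H)⁻¹ * Matrix.diagonal (fun k => (r k - ζ)⁻¹)
              - Matrix.diagonal (fun k => (l k - ζ)⁻¹)) *
            (1 + A * Hmat l r Ξ)⁻¹).mulVec ℓ) :=
  det_mul_det_eq_of_diagonal_mul_sub_eq_vecMulVec hrank
    (fun k => Multiset.prod_map_sub_mul_inv_sub_ne_zero (fun η hη => hHl η hη k)
      (fun η hη => hHr η hη k))
    hζL hζR hX hY

theorem stmt_2 {N : ℕ} (A : Matrix (Fin N) (Fin N) ℂ) (l r ℓ a : Fin N → ℂ)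
    (Ξ H : Multiset ℂ) (ζ : ℂ)
    (hrank : Matrix.diagonal l * A - A * Matrix.diagonal r = Matrix.vecMulVec ℓ a)
    (hΞr : ∀ ξ ∈ Ξ, ∀ k, ξ - r k ≠ 0)
    (hHr : ∀ η ∈ H, ∀ k, η - r k ≠ 0)
    (hHl : ∀ η ∈ H, ∀ k, η - l k ≠ 0)
    (hζL : ∀ k, ζ - l k ≠ 0)
    (hζR : ∀ k, ζ - r k ≠ 0)
    (hX : IsUnit (1 + A * Hmat l r Ξ).det)
    (hY : IsUnit (1 + A * Hmat l r H).det) :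
    (1 + (A * Hmat l r Ξ) * Matrix.diagonal (fun k => (ζ - l k) * (ζ - r k)⁻¹)).det *
      (1 + (A * Hmat l r H) * Matrix.diagonal (fun k => (ζ - r k) * (ζ - l k)⁻¹)).det
    = (1 + A * Hmat l r Ξ).det * (1 + A * Hmat l r H).det *
        (1 + (a ᵥ* Hmat l r H) ⬝ᵥ
          ((1 + A * Hmat l r H)⁻¹ *
            (Hmat l r Ξ * (Hmat l r H)⁻¹ * Matrix.diagonal (fun k => (r k - ζ)⁻¹)
              - Matrix.diagonal (fun k => (l k - ζ)⁻¹)) *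
            (1 + A * Hmat l r Ξ)⁻¹).mulVec ℓ) :=
  stmt_2_general A l r ℓ a Ξ H ζ hrank hHr hHl hζL hζR hX hY
end
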